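/- arXiv:1511.01438 — 7 statements merged into one kernel-verified Lean document; each statement's English description precedes it below -/
import Mathlib

section
/- The set {1, √2, √(2−√2), √(2+√2)} of real numbers is linearly independent over the rationals; equivalently, if a, b, c, d are integers with a + b√2 + c√(2−√2) + d√(2+√2) = 0, then a = b = c = d = 0. -/
private lemma int_sqrt2 (A B : ℤ)
    (h : (A : ℝ) + (B : ℝ) * Real.sqrt 2 = 0) : A = 0 ∧ B = 0 := by
  rcases eq_or_ne B 0 with hB | hB
  · subst hB
    simp at h
    exact ⟨by exact_mod_cast h, rfl⟩
  · exfalso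
    apply irrational_sqrt_two
    refine ⟨(-A : ℚ) / (B : ℚ), ?_⟩
    have hB' : (B : ℝ) ≠ 0 := Int.cast_ne_zero.mpr hB
    push_cast
    field_simp
    linarith

private lemma sq_eq_two_mul_sq (m n : ℤ) (h : m ^ 2 = 2 * n ^ 2) : m = 0 ∧ n = 0 := by
  have h2 : Real.sqrt 2 ^ 2 = 2 := Real.sq_sqrt (by norm_num)
  have hr : ((m : ℝ) - n * Real.sqrt 2) * ((m : ℝ) + n * Real.sqrt 2) = 0 := by
    have hm : (m : ℝ) ^ 2 = 2 * (n : ℝ) ^ 2 := by exact_mod_cast h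
    linear_combination hm - (n : ℝ) ^ 2 * h2
  rcases mul_eq_zero.mp hr with h' | h'
  · obtain ⟨hm, hn⟩ := int_sqrt2 m (-n) (by push_cast; linarith)
    exact ⟨hm, by omega⟩
  · exact int_sqrt2 m n (by linarith)

private lemma quad_indep (t : ℝ) (ht2 : t ^ 2 = 2 + Real.sqrt 2) (P Q R : ℤ)
    (h : (P : ℝ) + Q * t + R * t ^ 2 = 0) : P = 0 ∧ Q = 0 ∧ R = 0 := by
  have h2 : Real.sqrt 2 ^ 2 = 2 := Real.sq_sqrt (by norm_num)
  have e1 : (Q : ℝ) * t = -((P : ℝ) + R * t ^ 2) := by linarith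
  have e2 : ((Q : ℝ) * t) ^ 2 = ((P : ℝ) + R * t ^ 2) ^ 2 := by rw [e1]; ring
  have e2' : (Q : ℝ) ^ 2 * (2 + Real.sqrt 2)
      = ((P : ℝ) + R * (2 + Real.sqrt 2)) ^ 2 := by
    rw [← ht2]; linear_combination e2
  have e3 : (((P + 2 * R) ^ 2 + 2 * R ^ 2 - 2 * Q ^ 2 : ℤ) : ℝ)
      + ((2 * (P + 2 * R) * R - Q ^ 2 : ℤ) : ℝ) * Real.sqrt 2 = 0 := by
    push_cast
    linear_combination -e2' - (R : ℝ) ^ 2 * h2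
  obtain ⟨hA, hB⟩ := int_sqrt2 _ _ e3
  have hP2 : P ^ 2 = 2 * R ^ 2 := by linear_combination hA - 2 * hB
  obtain ⟨hP, hR⟩ := sq_eq_two_mul_sq P R hP2
  have hQ : Q = 0 := by nlinarith [hB, hR]
  exact ⟨hP, hQ, hR⟩

private lemma cubic_indep (t : ℝ) (ht2 : t ^ 2 = 2 + Real.sqrt 2) (p q r w : ℤ)
    (h : (p : ℝ) + q * t + r * t ^ 2 + w * t ^ 3 = 0) :
    p = 0 ∧ q = 0 ∧ r = 0 ∧ w = 0 := by
  have h2 : Real.sqrt 2 ^ 2 = 2 := Real.sq_sqrt (by norm_num)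
  have ht4 : t ^ 4 = 4 * t ^ 2 - 2 := by
    linear_combination (t ^ 2 - 2 + Real.sqrt 2) * ht2 + h2
  have E2 : -2 * (w : ℝ) + p * t + ((q : ℝ) + 4 * w) * t ^ 2 + (r : ℝ) * t ^ 3 = 0 := by
    linear_combination t * h - (w : ℝ) * ht4
  have E3 : ((-2 * w ^ 2 - r * p : ℤ) : ℝ) + ((p * w - r * q : ℤ) : ℝ) * t
      + ((w * (q + 4 * w) - r ^ 2 : ℤ) : ℝ) * t ^ 2 = 0 := by
    push_cast
    linear_combination (w : ℝ) * E2 - (r : ℝ) * h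
  obtain ⟨hP, hQ, hR⟩ := quad_indep t ht2 _ _ _ E3
  have hsq : (r ^ 2 - 2 * w ^ 2) ^ 2 = 2 * (w ^ 2) ^ 2 := by
    linear_combination (-(w ^ 2)) * hP + (-(r * w)) * hQ + (-(r ^ 2)) * hR
  obtain ⟨hrw, hw2⟩ := sq_eq_two_mul_sq (r ^ 2 - 2 * w ^ 2) (w ^ 2) hsq
  have hw : w = 0 := by nlinarith [hw2]
  have hr : r = 0 := by nlinarith [hrw, hw]
  have h' : (p : ℝ) + q * t + (0 : ℤ) * t ^ 2 = 0 := by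
    have : (r : ℝ) = 0 := by exact_mod_cast congrArg (Int.cast : ℤ → ℝ) hr
    have hw' : (w : ℝ) = 0 := by exact_mod_cast congrArg (Int.cast : ℤ → ℝ) hw
    push_cast
    linear_combination h - t ^ 2 * this - t ^ 3 * hw'
  obtain ⟨hp, hq, -⟩ := quad_indep t ht2 p q 0 h'
  exact ⟨hp, hq, hr, hw⟩

theorem sqrt_set_linear_independent (a b c d : ℤ)
    (h : (a : ℝ) + (b : ℝ) * Real.sqrt 2 + (c : ℝ) * Real.sqrt (2 - Real.sqrt 2)
        + (d : ℝ) * Real.sqrt (2 + Real.sqrt 2) = 0) :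
    a = 0 ∧ b = 0 ∧ c = 0 ∧ d = 0 := by
  set t := Real.sqrt (2 + Real.sqrt 2) with htdef
  set s := Real.sqrt (2 - Real.sqrt 2) with hsdef
  have h2 : Real.sqrt 2 ^ 2 = 2 := Real.sq_sqrt (by norm_num)
  have hs2nonneg : (0 : ℝ) ≤ 2 - Real.sqrt 2 := by
    nlinarith [Real.sqrt_nonneg 2, h2]
  have ht2 : t ^ 2 = 2 + Real.sqrt 2 :=
    Real.sq_sqrt (by positivity)
  have ht_pos : 0 < t := Real.sqrt_pos.mpr (by positivity)
  have hst : s * t = Real.sqrt 2 := by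
    rw [hsdef, htdef, ← Real.sqrt_mul hs2nonneg]
    congr 1
    linear_combination -h2
  have hs_eq : s = t ^ 3 - 3 * t := by
    have hh : s * t = (t ^ 3 - 3 * t) * t := by
      rw [hst]
      linear_combination (-(t ^ 2 + Real.sqrt 2 - 1)) * ht2 - h2
    exact mul_right_cancel₀ (ne_of_gt ht_pos) hh
  have E : ((a - 2 * b : ℤ) : ℝ) + ((d - 3 * c : ℤ) : ℝ) * t + (b : ℝ) * t ^ 2
      + (c : ℝ) * t ^ 3 = 0 := by
    push_cast
    linear_combination h + (b : ℝ) * ht2 - (c : ℝ) * hs_eq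
  obtain ⟨h1, h2', h3, h4⟩ := cubic_indep t ht2 (a - 2 * b) (d - 3 * c) b c E
  refine ⟨by omega, h3, h4, by omega⟩
end

section
/- Let f : 𝔽₂ⁿ → ℤ₄ with f(x) = a₁(x) + 2a₂(x) where a₁, a₂ : 𝔽₂ⁿ → 𝔽₂. Then for every u ∈ 𝔽₂ⁿ, 2·H_f(u) = (W_{a₂}(u) + W_{a₁⊕a₂}(u)) + i·(W_{a₂}(u) − W_{a₁⊕a₂}(u)), where H_f(u) = Σ_x i^{f(x)} (−1)^{u·x} and W_g(u) = Σ_x (−1)^{g(x) ⊕ u·x}. -/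
open Finset Complex

/-- Standard inner product on `𝔽₂ⁿ`. -/
def ip {n : ℕ} (u x : Fin n → ZMod 2) : ZMod 2 := ∑ i, u i * x i

/-- Walsh–Hadamard transform of a Boolean function. -/
noncomputable def WHT {n : ℕ} (g : (Fin n → ZMod 2) → ZMod 2) (u : Fin n → ZMod 2) : ℂ :=
  ∑ x : Fin n → ZMod 2, (-1 : ℂ) ^ ((g x + ip u x).val)

/-- Generalized Walsh–Hadamard transform of `f : 𝔽₂ⁿ → ℤ_q`. -/
noncomputable def GWT {n : ℕ} (q : ℕ) [NeZero q] (f : (Fin n → ZMod 2) → ZMod q)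
    (u : Fin n → ZMod 2) : ℂ :=
  ∑ x : Fin n → ZMod 2,
    Complex.exp (2 * Real.pi * Complex.I * ((f x).val : ℂ) / (q : ℂ)) *
      (-1 : ℂ) ^ ((ip u x).val)

lemma exp_quarter (k : ℕ) : Complex.exp (2 * Real.pi * Complex.I * (k : ℂ) / 4) = Complex.I ^ k := by
  have h : (2 * (Real.pi:ℂ) * Complex.I * (k : ℂ) / 4) = (k:ℕ) * ((Real.pi:ℂ)/2 * Complex.I) := by
    ring
  rw [h, Complex.exp_nat_mul]
  congr 1
  rw [Complex.exp_mul_I]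
  simp

lemma key_pointwise (b1 b2 e : ZMod 2) :
    2 * (Complex.I ^ ((((b1.val : ZMod 4) + 2*(b2.val : ZMod 4))).val) * (-1:ℂ)^e.val)
      = ((-1:ℂ)^((b2+e).val) + (-1:ℂ)^((b1+b2+e).val))
        + Complex.I * ((-1:ℂ)^((b2+e).val) - (-1:ℂ)^((b1+b2+e).val)) := by
  have h1 : ∀ a : ZMod 2, a = 0 ∨ a = 1 := by decide
  rcases h1 b1 with h|h <;> rcases h1 b2 with g|g <;> rcases h1 e with k|k <;>
    subst h <;> subst g <;> subst k <;>
    norm_num [show ((0:ZMod 2)).val = 0 from rfl, show ((1:ZMod 2)).val = 1 from rfl,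
      show ((2:ZMod 2)).val = 0 from rfl, show ((3:ZMod 2)).val = 1 from rfl,
      show ((1:ZMod 4)).val = 1 from rfl, show ((2:ZMod 4)).val = 2 from rfl,
      show ((3:ZMod 4)).val = 3 from rfl,
      show ((1:ZMod 2)+1) = 0 from by decide, show ((1:ZMod 2)+0) = 1 from by decide,
      show ((0:ZMod 2)+1) = 1 from by decide, show ((0:ZMod 2)+0) = 0 from by decide,
      pow_succ, Complex.I_sq] <;> ring

theorem gwt_z4_decomposition (n : ℕ) (a1 a2 : (Fin n → ZMod 2) → ZMod 2)
    (f : (Fin n → ZMod 2) → ZMod 4)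
    (hf : ∀ x, f x = ((a1 x).val : ZMod 4) + 2 * ((a2 x).val : ZMod 4))
    (u : Fin n → ZMod 2) :
    2 * GWT 4 f u =
      (WHT a2 u + WHT (fun x => a1 x + a2 x) u)
        + Complex.I * (WHT a2 u - WHT (fun x => a1 x + a2 x) u) := by
  unfold GWT WHT
  rw [mul_sum, ← sum_add_distrib, ← sum_sub_distrib, mul_sum, ← sum_add_distrib]
  refine sum_congr rfl fun x _ => ?_
  rw [hf x]
  have h4 : ((4:ℕ):ℂ) = 4 := by norm_num
  rw [h4, exp_quarter]
  exact key_pointwise (a1 x) (a2 x) (ip u x)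
end

section
/- Let k ≥ 2, f : 𝔽₂ⁿ → ℤ_{2^k} with f(x) = g(x) + 2h(x), where g : 𝔽₂ⁿ → 𝔽₂ and h : 𝔽₂ⁿ → ℤ_{2^{k−1}}. Then for every u ∈ 𝔽₂ⁿ, 2·H_f^{(2^k)}(u) = (1 + ζ_{2^k})·H_h^{(2^{k−1})}(u) + (1 − ζ_{2^k})·H_{h+2^{k−2}g}^{(2^{k−1})}(u). -/
open Finset Complex

private lemma expz (z : ℂ) (m : ℕ) :
    Complex.exp (2 * Real.pi * Complex.I * (m : ℂ) / z) =
      Complex.exp (2 * Real.pi * Complex.I / z) ^ m := by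
  rw [← Complex.exp_nat_mul]
  congr 1
  ring

theorem gwt_halving (n k : ℕ) (hk : 2 ≤ k) (g : (Fin n → ZMod 2) → ZMod 2)
    (h : (Fin n → ZMod 2) → ZMod (2 ^ (k - 1))) (f : (Fin n → ZMod 2) → ZMod (2 ^ k))
    (hf : ∀ x, f x = ((g x).val : ZMod (2 ^ k)) + 2 * ((h x).val : ZMod (2 ^ k)))
    (u : Fin n → ZMod 2) :
    2 * GWT (2 ^ k) f u =
      (1 + Complex.exp (2 * Real.pi * Complex.I / (2 ^ k : ℂ))) * GWT (2 ^ (k - 1)) h u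
        + (1 - Complex.exp (2 * Real.pi * Complex.I / (2 ^ k : ℂ))) *
          GWT (2 ^ (k - 1))
            (fun x => h x + (2 ^ (k - 2) : ZMod (2 ^ (k - 1))) * ((g x).val : ZMod (2 ^ (k - 1)))) u := by
  have h2k : (2:ℕ)^k = 2 * 2^(k-1) := by
    conv_lhs => rw [show k = (k-1)+1 by omega]
    rw [pow_succ']
  have h2k1 : (2:ℕ)^(k-1) = 2 * 2^(k-2) := by
    conv_lhs => rw [show k - 1 = (k-2)+1 by omega]
    rw [pow_succ']
  set ζ : ℂ := Complex.exp (2 * Real.pi * Complex.I / ((2:ℂ) ^ k)) with hζ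
  have hcast : ((2^k : ℕ) : ℂ) = (2:ℂ)^k := by push_cast; ring
  have hcast1 : ((2^(k-1) : ℕ) : ℂ) = (2:ℂ)^(k-1) := by push_cast; ring
  have hne : ((2:ℂ)^(k-1)) ≠ 0 := pow_ne_zero _ two_ne_zero
  have hne2 : ((2:ℂ)^(k-2)) ≠ 0 := pow_ne_zero _ two_ne_zero
  have hc1 : ((2:ℂ))^(k-1) = 2 * 2^(k-2) := by
    rw [← hcast1, h2k1]; push_cast; ring
  have hck : ((2:ℂ))^k = 2 * 2^(k-1) := by
    rw [← hcast, h2k]; push_cast; ring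
  have hζ2 : Complex.exp (2 * Real.pi * Complex.I / ((2:ℂ)^(k-1))) = ζ ^ 2 := by
    rw [hζ, ← Complex.exp_nat_mul]
    congr 1
    rw [hck]
    field_simp
    ring
  have hN1 : (ζ^2) ^ ((2:ℕ)^(k-1)) = 1 := by
    rw [← hζ2, ← Complex.exp_nat_mul]
    have e : ((2^(k-1):ℕ) : ℂ) * (2 * (Real.pi:ℂ) * Complex.I / ((2:ℂ)^(k-1))) =
        2 * Real.pi * Complex.I := by
      rw [hcast1]; field_simp
    rw [e, Complex.exp_two_pi_mul_I]
  have hhalf : (ζ^2) ^ ((2:ℕ)^(k-2)) = -1 := by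
    rw [← hζ2, ← Complex.exp_nat_mul]
    have e : ((2^(k-2):ℕ) : ℂ) * (2 * (Real.pi:ℂ) * Complex.I / ((2:ℂ)^(k-1))) =
        Real.pi * Complex.I := by
      have : ((2^(k-2):ℕ) : ℂ) = (2:ℂ)^(k-2) := by push_cast; ring
      rw [this, hc1]
      field_simp
    rw [e, Complex.exp_pi_mul_I]
  unfold GWT
  rw [Finset.mul_sum, Finset.mul_sum, Finset.mul_sum, ← Finset.sum_add_distrib]
  refine Finset.sum_congr rfl fun x _ => ?_
  have hav : (g x).val < 2 := ZMod.val_lt _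
  have hbv : (h x).val < 2^(k-1) := ZMod.val_lt _
  have hfv : (f x).val = (g x).val + 2*(h x).val := by
    rw [hf]
    have e : ((g x).val : ZMod (2^k)) + 2*((h x).val : ZMod (2^k))
        = (((g x).val + 2*(h x).val : ℕ) : ZMod (2^k)) := by push_cast; ring
    rw [e, ZMod.val_cast_of_lt]
    omega
  have hcv : ((2^(k-2) : ZMod (2^(k-1))) * ((g x).val : ZMod (2^(k-1)))).val
      = 2^(k-2) * (g x).val := by
    have e : (2^(k-2) : ZMod (2^(k-1))) * ((g x).val : ZMod (2^(k-1)))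
        = ((2^(k-2) * (g x).val : ℕ) : ZMod (2^(k-1))) := by push_cast; ring
    rw [e, ZMod.val_cast_of_lt]
    have : 2^(k-2) * (g x).val ≤ 2^(k-2) * 1 := Nat.mul_le_mul_left _ (by omega)
    omega
  have hsv : (h x + (2^(k-2) : ZMod (2^(k-1))) * ((g x).val : ZMod (2^(k-1)))).val
      = ((h x).val + 2^(k-2) * (g x).val) % 2^(k-1) := by
    rw [ZMod.val_add, hcv]
  simp only [hfv, hsv, hcast, hcast1]
  rw [expz, expz, expz]
  rw [hζ2, ← hζ]
  rw [← pow_eq_pow_mod _ hN1]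
  have hg : (g x).val = 0 ∨ (g x).val = 1 := by omega
  rcases hg with hg | hg <;> rw [hg]
  · simp only [Nat.zero_add, Nat.mul_zero, Nat.add_zero]
    rw [pow_mul]
    ring
  · rw [pow_add, Nat.mul_one, pow_add, hhalf, pow_mul]
    ring
end

section
/- Let k ≥ 2 and let h, h' : 𝔽₂ⁿ → ℤ_{2^{k−1}} be two generalized Boolean functions. Suppose that for every u ∈ 𝔽₂ⁿ: |H_h^{(2^{k−1})}(u)|² = 2ⁿ, |H_{h'}^{(2^{k−1})}(u)|² = 2ⁿ, and Im( conj(H_h^{(2^{k−1})}(u)) · H_{h'}^{(2^{k−1})}(u) ) = 0. Then for any g : 𝔽₂ⁿ → 𝔽₂ with h' = h + 2^{k−2}g, the function f(x) = g(x) + 2h(x) : 𝔽₂ⁿ → ℤ_{2^k} satisfies |H_f^{(2^k)}(u)|² = 2ⁿ for all u, i.e., f is gbent. -/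
/-! Write `χ` for the standard additive character `j ↦ exp (2πi j / q)` of `ZMod q` and
`ζ = χ 1` in `ZMod 2^k`. Pointwise, `χ (f x) = ζ^{g x} χ (h x)` and `χ (h' x) = (-1)^{g x} χ (h x)`,
so `2 H_f = (1 + ζ) H_h + (1 - ζ) H_{h'}`. Because `(1 + ζ) · conj (1 - ζ) = 2i Im ζ` is purely
imaginary while `conj H_h · H_{h'}` is real, the cross term vanishes and
`|2 H_f|² = (|1 + ζ|² + |1 - ζ|²) 2ⁿ = 4 · 2ⁿ`. -/

open Finset Complex

open ZMod

lemma stdAddChar_natCast_mul {N M : ℕ} [NeZero N] [NeZero M] (d : ℕ) (hN : N = d * M) (j : ℕ) :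
    stdAddChar ((d : ZMod N) * (j : ZMod N)) = stdAddChar (j : ZMod M) := by
  have hd : (d : ℂ) ≠ 0 := by
    have hN0 := NeZero.ne N
    rw [hN] at hN0
    exact_mod_cast left_ne_zero_of_mul hN0
  have hM : (M : ℂ) ≠ 0 := by exact_mod_cast NeZero.ne M
  rw [← Nat.cast_mul]
  simp only [stdAddChar_apply, toCircle_natCast, hN]
  congr 1
  push_cast
  field_simp

lemma stdAddChar_one_zmod_two : stdAddChar (1 : ZMod 2) = -1 := by
  have h := stdAddChar_coe (N := 2) 1
  push_cast at h
  rw [h, show 2 * (Real.pi : ℂ) * I * 1 / 2 = Real.pi * I by ring, exp_pi_mul_I]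

lemma norm_stdAddChar {N : ℕ} [NeZero N] (j : ZMod N) : ‖stdAddChar j‖ = 1 := by
  rw [stdAddChar_apply, Circle.norm_coe]

lemma two_mul_stdAddChar_val_add_two_mul_val {N M : ℕ} [NeZero N] [NeZero M] (L : ℕ)
    (hN : N = 2 * M) (hM : M = L * 2) (a : ZMod M) (b : ZMod 2) :
    2 * stdAddChar ((b.val : ZMod N) + 2 * (a.val : ZMod N)) =
      (1 + stdAddChar (1 : ZMod N)) * stdAddChar a +
        (1 - stdAddChar (1 : ZMod N)) * stdAddChar (a + (L : ZMod M) * (b.val : ZMod M)) := by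
  have h2 : (2 : ZMod N) = ((2 : ℕ) : ZMod N) := by norm_cast
  rw [AddChar.map_add_eq_mul, AddChar.map_add_eq_mul, h2, stdAddChar_natCast_mul 2 hN,
    stdAddChar_natCast_mul L hM, natCast_zmod_val, natCast_zmod_val]
  obtain rfl | rfl : b = 0 ∨ b = 1 := by revert b; decide
  · simp only [ZMod.val_zero, Nat.cast_zero, AddChar.map_zero_eq_one]
    ring
  · simp only [ZMod.val_one, Nat.cast_one, stdAddChar_one_zmod_two]
    ring

lemma GWT_eq_sum_stdAddChar {n : ℕ} (q : ℕ) [NeZero q] (f : (Fin n → ZMod 2) → ZMod q)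
    (u : Fin n → ZMod 2) :
    GWT q f u = ∑ x, stdAddChar (f x) * (-1 : ℂ) ^ (ip u x).val := by
  simp only [GWT, stdAddChar_apply, toCircle_apply]

lemma GWT_linear_combination {n q₁ q₂ q₃ : ℕ} [NeZero q₁] [NeZero q₂] [NeZero q₃]
    {f₁ : (Fin n → ZMod 2) → ZMod q₁} {f₂ : (Fin n → ZMod 2) → ZMod q₂}
    {f₃ : (Fin n → ZMod 2) → ZMod q₃} {c a b : ℂ}
    (h : ∀ x, c * stdAddChar (f₁ x) = a * stdAddChar (f₂ x) + b * stdAddChar (f₃ x))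
    (u : Fin n → ZMod 2) :
    c * GWT q₁ f₁ u = a * GWT q₂ f₂ u + b * GWT q₃ f₃ u := by
  simp only [GWT_eq_sum_stdAddChar, mul_sum, ← sum_add_distrib]
  refine sum_congr rfl fun x _ => ?_
  linear_combination (-1 : ℂ) ^ (ip u x).val * h x

lemma norm_one_add_mul_add_one_sub_mul_sq {a X Y : ℂ} {N : ℝ} (ha : ‖a‖ = 1)
    (hX : ‖X‖ ^ 2 = N) (hY : ‖Y‖ ^ 2 = N) (hXY : (starRingEnd ℂ X * Y).im = 0) :
    ‖(1 + a) * X + (1 - a) * Y‖ ^ 2 = 4 * N := by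
  rw [Complex.sq_norm, normSq_apply] at hX hY ⊢
  have ha' : a.re * a.re + a.im * a.im = 1 := by
    rw [← normSq_apply, ← Complex.sq_norm, ha, one_pow]
  simp only [mul_im, conj_re, conj_im] at hXY
  simp only [add_re, add_im, mul_re, mul_im, sub_re, sub_im, one_re, one_im]
  linear_combination (1 + 2 * a.re + a.re ^ 2 + a.im ^ 2) * hX +
      (1 - 2 * a.re + a.re ^ 2 + a.im ^ 2) * hY + 4 * a.im * hXY +
      (2 * N - 2 * (X.re * Y.re + X.im * Y.im)) * ha'

theorem gbent_of_components (n k : ℕ) (hk : 2 ≤ k)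
    (h h' : (Fin n → ZMod 2) → ZMod (2 ^ (k - 1))) (g : (Fin n → ZMod 2) → ZMod 2)
    (f : (Fin n → ZMod 2) → ZMod (2 ^ k))
    (H1 : ∀ u, ‖GWT (2 ^ (k - 1)) h u‖ ^ 2 = 2 ^ n)
    (H2 : ∀ u, ‖GWT (2 ^ (k - 1)) h' u‖ ^ 2 = 2 ^ n)
    (H3 : ∀ u, ((starRingEnd ℂ) (GWT (2 ^ (k - 1)) h u) * GWT (2 ^ (k - 1)) h' u).im = 0)
    (hh' : ∀ x, h' x = h x + (2 ^ (k - 2) : ZMod (2 ^ (k - 1))) * ((g x).val : ZMod (2 ^ (k - 1))))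
    (hf : ∀ x, f x = ((g x).val : ZMod (2 ^ k)) + 2 * ((h x).val : ZMod (2 ^ k))) :
    ∀ u, ‖GWT (2 ^ k) f u‖ ^ 2 = 2 ^ n := by
  intro u
  have hN : 2 ^ k = 2 * 2 ^ (k - 1) := by rw [← pow_succ']; congr 1; omega
  have hM : 2 ^ (k - 1) = 2 ^ (k - 2) * 2 := by rw [← pow_succ]; congr 1; omega
  have hcomb : 2 * GWT (2 ^ k) f u =
      (1 + stdAddChar (1 : ZMod (2 ^ k))) * GWT (2 ^ (k - 1)) h u +
        (1 - stdAddChar (1 : ZMod (2 ^ k))) * GWT (2 ^ (k - 1)) h' u := by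
    refine GWT_linear_combination (fun x => ?_) u
    have hx := two_mul_stdAddChar_val_add_two_mul_val _ hN hM (h x) (g x)
    push_cast at hx
    rwa [hf x, hh' x]
  have h2f :=
    norm_one_add_mul_add_one_sub_mul_sq (norm_stdAddChar (1 : ZMod (2 ^ k))) (H1 u) (H2 u) (H3 u)
  rw [← hcomb, norm_mul, mul_pow] at h2f
  norm_num at h2f
  linarith
end

section
/- Let n be even and f : 𝔽₂ⁿ → ℤ₄ be gbent, written as f(x) = a₁(x) + 2a₂(x) with a₁, a₂ : 𝔽₂ⁿ → 𝔽₂. Then both Boolean functions a₂ and a₁ ⊕ a₂ are bent, i.e., |W_{a₂}(u)| = |W_{a₁⊕a₂}(u)| = 2^{n/2} for all u ∈ 𝔽₂ⁿ. -/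
open Finset Complex

/-!
For `a ∈ {0, 1}` one has `i ^ a = (1 + i) / 2 + (1 - i) / 2 * (-1) ^ a`, so the character
`i ^ (a₁ + 2 a₂)` splits as `(1 + i) / 2 * (-1) ^ a₂ + (1 - i) / 2 * (-1) ^ (a₁ ⊕ a₂)`. Hence
`H_f(u) = (1 + i) / 2 * W_{a₂}(u) + (1 - i) / 2 * W_{a₁ ⊕ a₂}(u)` and, the Walsh coefficients
`A, B` being integers, `|H_f(u)|² = (A² + B²) / 2`. Gbentness thus becomes
`A² + B² = 2 · 4 ^ k` with `k = n / 2`, whose only integer solutions have `|A| = |B| = 2 ^ k`: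
squares are `0` or `1` mod `4`, so `A` and `B` are even and one descends to `A² + B² = 2`.
-/

lemma Int.even_and_sq_emod_four_eq_zero_or_sq_emod_four_eq_one (c : ℤ) :
    Even c ∧ c ^ 2 % 4 = 0 ∨ c ^ 2 % 4 = 1 := by
  rcases Int.even_or_odd c with hc | hc
  · exact Or.inl ⟨hc, Int.emod_eq_zero_of_dvd (by simpa using pow_dvd_pow_of_dvd hc.two_dvd 2)⟩
  · exact Or.inr (Int.sq_mod_four_eq_one_of_odd hc)

lemma Int.even_and_even_of_four_dvd_sq_add_sq {a b : ℤ} (h : 4 ∣ a ^ 2 + b ^ 2) :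
    Even a ∧ Even b := by
  rcases Int.even_and_sq_emod_four_eq_zero_or_sq_emod_four_eq_one a with ⟨ha, ha'⟩ | ha <;>
    rcases Int.even_and_sq_emod_four_eq_zero_or_sq_emod_four_eq_one b with ⟨hb, hb'⟩ | hb
  · exact ⟨ha, hb⟩
  all_goals
    generalize a ^ 2 = A at *
    generalize b ^ 2 = B at *
    omega

lemma Int.abs_eq_two_pow_of_sq_add_sq_eq {a b : ℤ} {k : ℕ} (h : a ^ 2 + b ^ 2 = 2 * 4 ^ k) :
    |a| = 2 ^ k := by
  induction k generalizing a b with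
  | zero =>
    have : -1 ≤ a := by nlinarith
    have : a ≤ 1 := by nlinarith
    have : -1 ≤ b := by nlinarith
    have : b ≤ 1 := by nlinarith
    interval_cases a <;> interval_cases b <;> simp_all
  | succ k ih =>
    obtain ⟨⟨c, rfl⟩, ⟨d, rfl⟩⟩ := Int.even_and_even_of_four_dvd_sq_add_sq
      (a := a) (b := b) (h ▸ ⟨2 * 4 ^ k, by ring⟩)
    have hcd : 4 * (c ^ 2 + d ^ 2 - 2 * 4 ^ k) = 0 := by linear_combination h
    rw [← two_mul, abs_mul, ih (a := c) (b := d) (by simpa [sub_eq_zero] using hcd), pow_succ']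
    norm_num

lemma exp_two_pi_I_mul_div_four (k : ℕ) : exp (2 * Real.pi * I * k / 4) = I ^ k := by
  rw [show 2 * Real.pi * I * k / 4 = k * (Real.pi / 2 * I) by ring, exp_nat_mul,
    exp_pi_div_two_mul_I]

lemma neg_one_pow_val_add {R : Type*} [Ring R] (x y : ZMod 2) :
    (-1 : R) ^ (x + y).val = (-1) ^ x.val * (-1) ^ y.val := by
  rw [ZMod.val_add, ← neg_one_pow_eq_pow_mod_two, pow_add]

lemma ZMod.val_natCast_val_add_two_mul (a b : ZMod 2) :
    ((a.val : ZMod 4) + 2 * (b.val : ZMod 4)).val = a.val + 2 * b.val := by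
  fin_cases a <;> fin_cases b <;> rfl

lemma I_pow_val (a : ZMod 2) : I ^ a.val = (1 + I) / 2 + (1 - I) / 2 * (-1) ^ a.val := by
  fin_cases a
  · show I ^ 0 = _ + _ * (-1) ^ 0
    ring
  · show I ^ 1 = _ + _ * (-1) ^ 1
    ring

lemma exp_val_add_two_mul_mul_neg_one_pow (a b w : ZMod 2) :
    exp (2 * Real.pi * I * (((a.val : ZMod 4) + 2 * (b.val : ZMod 4)).val : ℂ) / 4) *
        (-1) ^ w.val =
      (1 + I) / 2 * (-1) ^ (b + w).val + (1 - I) / 2 * (-1) ^ (a + b + w).val := by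
  rw [exp_two_pi_I_mul_div_four, ZMod.val_natCast_val_add_two_mul, pow_add, pow_mul, I_sq,
    I_pow_val, neg_one_pow_val_add, neg_one_pow_val_add, neg_one_pow_val_add]
  ring

lemma GWT_four_val_add_two_mul_val {n : ℕ} (a1 a2 : (Fin n → ZMod 2) → ZMod 2)
    (u : Fin n → ZMod 2) :
    GWT 4 (fun x => ((a1 x).val : ZMod 4) + 2 * ((a2 x).val : ZMod 4)) u =
      (1 + I) / 2 * WHT a2 u + (1 - I) / 2 * WHT (fun x => a1 x + a2 x) u := by
  simp only [GWT, WHT, mul_sum, ← sum_add_distrib]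
  refine sum_congr rfl fun x _ => ?_
  push_cast
  exact exp_val_add_two_mul_mul_neg_one_pow (a1 x) (a2 x) (ip u x)

lemma exists_intCast_eq_WHT {n : ℕ} (g : (Fin n → ZMod 2) → ZMod 2) (u : Fin n → ZMod 2) :
    ∃ A : ℤ, (A : ℂ) = WHT g u :=
  ⟨∑ x, (-1) ^ (g x + ip u x).val, by push_cast [WHT]; rfl⟩

lemma sq_norm_one_add_I_div_two_mul_add_one_sub_I_div_two_mul (A B : ℝ) :
    ‖(1 + I) / 2 * A + (1 - I) / 2 * B‖ ^ 2 = (A ^ 2 + B ^ 2) / 2 := by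
  rw [Complex.sq_norm, Complex.normSq_apply]
  simp only [add_re, mul_re, div_ofNat_re, one_re, I_re, add_zero, one_div, ofReal_re,
    div_ofNat_im, add_im, one_im, I_im, zero_add, ofReal_im, mul_zero, sub_zero, sub_re, sub_im,
    zero_sub, mul_im]
  ring

theorem components_bent_of_gbent_z4_general (n : ℕ)
    (a1 a2 : (Fin n → ZMod 2) → ZMod 2) (f : (Fin n → ZMod 2) → ZMod 4)
    (hf : ∀ x, f x = ((a1 x).val : ZMod 4) + 2 * ((a2 x).val : ZMod 4))
    (hgb : ∀ u, ‖GWT 4 f u‖ = 2 ^ (n / 2)) :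
    ∀ u, ‖WHT a2 u‖ = 2 ^ (n / 2) ∧
      ‖WHT (fun x => a1 x + a2 x) u‖ = 2 ^ (n / 2) := by
  intro u
  obtain rfl : f = _ := funext hf
  obtain ⟨A, hA⟩ := exists_intCast_eq_WHT a2 u
  obtain ⟨B, hB⟩ := exists_intCast_eq_WHT (fun x => a1 x + a2 x) u
  have hAB : A ^ 2 + B ^ 2 = 2 * 4 ^ (n / 2) := by
    have h := congrArg (· ^ 2) (hgb u)
    simp only [GWT_four_val_add_two_mul_val, ← hA, ← hB] at h
    rw [← ofReal_intCast A, ← ofReal_intCast B,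
      sq_norm_one_add_I_div_two_mul_add_one_sub_I_div_two_mul, ← pow_mul, pow_mul'] at h
    exact_mod_cast (by linarith : (A : ℝ) ^ 2 + B ^ 2 = 2 * 4 ^ (n / 2))
  rw [← hA, ← hB, Complex.norm_intCast, Complex.norm_intCast]
  exact ⟨mod_cast Int.abs_eq_two_pow_of_sq_add_sq_eq hAB,
    mod_cast Int.abs_eq_two_pow_of_sq_add_sq_eq ((add_comm _ _).trans hAB)⟩

theorem components_bent_of_gbent_z4 (n : ℕ) (hn : Even n)
    (a1 a2 : (Fin n → ZMod 2) → ZMod 2) (f : (Fin n → ZMod 2) → ZMod 4)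
    (hf : ∀ x, f x = ((a1 x).val : ZMod 4) + 2 * ((a2 x).val : ZMod 4))
    (hgb : ∀ u, ‖GWT 4 f u‖ = 2 ^ (n / 2)) :
    ∀ u, ‖WHT a2 u‖ = 2 ^ (n / 2) ∧
      ‖WHT (fun x => a1 x + a2 x) u‖ = 2 ^ (n / 2) :=
  components_bent_of_gbent_z4_general n a1 a2 f hf hgb
end

section
/- Let n = 2m and f : 𝔽₂ⁿ → ℤ_{2^k} be gbent and regular, meaning H_f(u) = 2^m ζ^{f*(u)} for some function f* : 𝔽₂ⁿ → ℤ_{2^k} and all u. For u ∈ 𝔽₂ⁿ define f_u(x) = f(x) + 2^{k−1}(u·x) and b_j^{(u)} = #{x : f_u(x) = j} for 0 ≤ j ≤ 2^k − 1. Then for each u there exists ρ_u with 0 ≤ ρ_u ≤ 2^{k−1} − 1 such that b^{(u)}_{2^{k−1}+ρ_u} = b^{(u)}_{ρ_u} ± 2^m, and b^{(u)}_{2^{k−1}+j} = b^{(u)}_{j} for all 0 ≤ j ≤ 2^{k−1}−1 with j ≠ ρ_u. -/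
open Finset Complex

/-!
Grouping the terms of the Walsh sum by the value of `f_u` turns regularity into
`∑ⱼ bⱼ ζʲ = 2^m ζ^{f*(u)}`, a vanishing integer combination of powers of `ζ` with coefficients
`bⱼ - 2^m [j = f*(u)]`. As `ζ^{2^{k-1}} = -1`, it folds onto `1, ζ, …, ζ^{2^{k-1}-1}`, which are
linearly independent over `ℚ` because the minimal polynomial `Φ_{2^k}` has degree `2^{k-1}`.
Hence those coefficients are `2^{k-1}`-periodic, and `b` deviates from periodicity only at
`ρ = f*(u) mod 2^{k-1}`.
-/

theorem IsPrimitiveRoot.eq_zero_of_sum_range_totient_eq_zero {K : Type*} [Field K] [CharZero K]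
    {ζ : K} {n : ℕ} (hζ : IsPrimitiveRoot ζ n) (hn : 0 < n) {a : ℕ → ℚ}
    (h : ∑ j ∈ range n.totient, (a j : K) * ζ ^ j = 0) : ∀ j < n.totient, a j = 0 := by
  have hdeg : (minpoly ℚ ζ).natDegree = n.totient := by
    rw [← Polynomial.cyclotomic_eq_minpoly_rat hζ hn, Polynomial.natDegree_cyclotomic]
  have hli := linearIndependent_pow (K := ℚ) ζ
  rw [hdeg] at hli
  intro j hj
  refine Fintype.linearIndependent_iff.1 hli (fun i => a i) ?_ ⟨j, hj⟩
  rw [Fin.sum_univ_eq_sum_range (fun i => a i • ζ ^ i)]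
  simpa [Algebra.smul_def] using h

theorem IsPrimitiveRoot.add_half_eq_of_sum_range_eq_zero {K : Type*} [Field K] [CharZero K]
    {ζ : K} {k : ℕ} (hζ : IsPrimitiveRoot ζ (2 ^ (k + 1))) {c : ℕ → ℤ}
    (h : ∑ j ∈ range (2 ^ (k + 1)), (c j : K) * ζ ^ j = 0) :
    ∀ j < 2 ^ k, c (2 ^ k + j) = c j := by
  have hhalf : ζ ^ 2 ^ k = -1 := by
    refine IsPrimitiveRoot.eq_neg_one_of_two_right ?_
    simpa [pow_succ] using hζ.pow_of_dvd (p := 2 ^ k) (by positivity) (pow_dvd_pow 2 k.le_succ)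
  have hfold : ∑ j ∈ range (2 ^ k), (((c j - c (2 ^ k + j) : ℤ) : ℚ) : K) * ζ ^ j = 0 := by
    rw [pow_succ, mul_two, sum_range_add] at h
    simp only [pow_add, hhalf] at h
    rw [← h, ← sum_add_distrib]
    exact sum_congr rfl fun j _ => by push_cast; ring
  have htot : (2 ^ (k + 1)).totient = 2 ^ k := by
    simp [Nat.totient_prime_pow_succ Nat.prime_two]
  intro j hj
  have hzero := hζ.eq_zero_of_sum_range_totient_eq_zero (by positivity)
    (a := fun j => ((c j - c (2 ^ k + j) : ℤ) : ℚ)) (by rwa [htot]) j (by rwa [htot])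
  rw [Int.cast_eq_zero, sub_eq_zero] at hzero
  exact hzero.symm

theorem Finset.sum_comp_zmod_eq_sum_range {α M : Type*} [Fintype α] [AddCommMonoid M] {q : ℕ}
    [NeZero q] (g : α → ZMod q) (φ : ZMod q → M) :
    ∑ x, φ (g x) = ∑ j ∈ range q, #{x | g x = j} • φ j := by
  rw [← sum_fiberwise_of_maps_to (g := fun x => (g x).val) fun x _ => mem_range.2 (g x).val_lt]
  refine sum_congr rfl fun j hj => ?_
  have hfiber : ∀ x, (g x).val = j ↔ g x = j := fun x =>
    ⟨fun h => by rw [← h, ZMod.natCast_zmod_val],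
      fun h => by rw [h, ZMod.val_cast_of_lt (mem_range.1 hj)]⟩
  simp_rw [hfiber]
  rw [sum_congr rfl fun x hx => by rw [(mem_filter.1 hx).2], sum_const]

theorem ZMod.stdAddChar_natCast_eq_pow {N : ℕ} [NeZero N] (j : ℕ) :
    ZMod.stdAddChar (j : ZMod N) = exp (2 * Real.pi * I / N) ^ j := by
  rw [ZMod.stdAddChar_apply, ZMod.toCircle_natCast, ← exp_nat_mul]
  ring_nf

theorem exp_two_pi_I_div_two_pow_succ_pow_two_pow (k : ℕ) :
    exp (2 * Real.pi * I / ((2 ^ (k + 1) : ℕ) : ℂ)) ^ 2 ^ k = -1 := by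
  rw [← exp_nat_mul, ← exp_pi_mul_I]
  congr 1
  push_cast
  field_simp
  ring

theorem GWT_two_pow_succ_eq_sum_stdAddChar {n k : ℕ} (f : (Fin n → ZMod 2) → ZMod (2 ^ (k + 1)))
    (u : Fin n → ZMod 2) :
    GWT (2 ^ (k + 1)) f u =
      ∑ x, ZMod.stdAddChar (f x + ((2 ^ k * (ip u x).val : ℕ) : ZMod (2 ^ (k + 1)))) := by
  refine sum_congr rfl fun x _ => ?_
  rw [AddChar.map_add_eq_mul, ZMod.stdAddChar_natCast_eq_pow, pow_mul,
    exp_two_pi_I_div_two_pow_succ_pow_two_pow, ZMod.stdAddChar_apply, ZMod.toCircle_apply]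

theorem exists_shift_defect_of_sub_ite_eq {N : ℕ → ℤ} {h r : ℕ} {M : ℤ} (hr : r < 2 * h)
    (hN : ∀ j < h, N (h + j) - (if h + j = r then M else 0) = N j - (if j = r then M else 0)) :
    ∃ ρ ≤ h - 1, (N (h + ρ) = N ρ + M ∨ N (h + ρ) = N ρ - M) ∧
      ∀ j ≤ h - 1, j ≠ ρ → N (h + j) = N j := by
  have hmod : r % h < h := Nat.mod_lt r (by omega)
  refine ⟨r % h, Nat.le_sub_one_of_lt hmod, ?_, fun j hj hjr => ?_⟩
  · have := hN (r % h) hmod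
    rcases lt_or_ge r h with hrh | hrh
    · rw [Nat.mod_eq_of_lt hrh] at this ⊢
      simp only [show h + r ≠ r by omega, if_false, if_true] at this
      omega
    · rw [Nat.mod_eq_sub_mod hrh, Nat.mod_eq_of_lt (by omega), Nat.add_sub_cancel' hrh] at this ⊢
      simp only [show r - h ≠ r by omega, if_false, if_true] at this
      omega
  · have hjh : j < h := by omega
    have hjr' : j ≠ r := by rintro rfl; exact hjr (Nat.mod_eq_of_lt hjh).symm
    have hhjr : h + j ≠ r := by
      rintro rfl; exact hjr (by rw [Nat.add_mod_left, Nat.mod_eq_of_lt hjh])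
    have := hN j hjh
    rw [if_neg hhjr, if_neg hjr'] at this
    omega

theorem value_distribution_of_regular_gbent (m k : ℕ) (hk : 1 ≤ k)
    (f f' : (Fin (2 * m) → ZMod 2) → ZMod (2 ^ k))
    (hreg : ∀ u, GWT (2 ^ k) f u =
      (2 ^ m : ℂ) * Complex.exp (2 * Real.pi * Complex.I / (2 ^ k : ℂ)) ^ (f' u).val) :
    ∀ u : Fin (2 * m) → ZMod 2,
      ∃ ρ : ℕ, ρ ≤ 2 ^ (k - 1) - 1 ∧
        ((fun b : ℕ → ℤ =>
          (b (2 ^ (k - 1) + ρ) = b ρ + 2 ^ m ∨ b (2 ^ (k - 1) + ρ) = b ρ - 2 ^ m) ∧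
          ∀ j : ℕ, j ≤ 2 ^ (k - 1) - 1 → j ≠ ρ → b (2 ^ (k - 1) + j) = b j)
         (fun j => ((Finset.univ.filter
            (fun x : Fin (2 * m) → ZMod 2 =>
              f x + ((2 ^ (k - 1) * (ip u x).val : ℕ) : ZMod (2 ^ k)) = (j : ZMod (2 ^ k)))).card : ℤ))) := by
  obtain ⟨k, rfl⟩ := Nat.exists_eq_add_of_le' hk
  intro u
  simp only [Nat.add_sub_cancel]
  set ζ : ℂ := exp (2 * Real.pi * I / (2 ^ (k + 1) : ℂ))
  have hζ : IsPrimitiveRoot ζ (2 ^ (k + 1)) := by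
    simpa using isPrimitiveRoot_exp (2 ^ (k + 1)) (by positivity)
  set b : ℕ → ℤ := fun j => #{x | f x + ((2 ^ k * (ip u x).val : ℕ) : ZMod (2 ^ (k + 1))) = j}
  set r := (f' u).val
  have hr : r < 2 ^ (k + 1) := ZMod.val_lt _
  have hspectrum : ∑ j ∈ range (2 ^ (k + 1)), (b j : ℂ) * ζ ^ j = 2 ^ m * ζ ^ r := by
    rw [← hreg u, GWT_two_pow_succ_eq_sum_stdAddChar, sum_comp_zmod_eq_sum_range]
    simp [b, ζ, ZMod.stdAddChar_natCast_eq_pow]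
  have hfold := hζ.add_half_eq_of_sum_range_eq_zero
    (c := fun j => b j - if j = r then 2 ^ m else 0) (by
      simp only [Int.cast_sub, sub_mul, sum_sub_distrib, hspectrum]
      push_cast
      simp [ite_mul, hr])
  exact exists_shift_defect_of_sub_ite_eq (by rwa [pow_succ, mul_comm] at hr) hfold
end

section
/- Let n be even and a₃, a₁⊕a₃, a₂⊕a₃, a₁⊕a₂⊕a₃ be bent Boolean functions on 𝔽₂ⁿ satisfying W_{a₃}(u)·W_{a₁⊕a₂⊕a₃}(u) = W_{a₁⊕a₃}(u)·W_{a₂⊕a₃}(u) for all u. Then the Boolean function F(x, y₁, y₂) = y₁a₁(x) ⊕ y₂a₂(x) ⊕ a₃(x) on 𝔽₂^{n+2} is semibent: W_F takes only values in {0, ±2^{(n+4)/2}}. -/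
open Finset Complex

/-- Walsh–Hadamard transform on `𝔽₂ⁿ × 𝔽₂ × 𝔽₂`. -/
noncomputable def WHT3 {n : ℕ} (F : (Fin n → ZMod 2) × ZMod 2 × ZMod 2 → ZMod 2)
    (u : Fin n → ZMod 2) (v1 v2 : ZMod 2) : ℂ :=
  ∑ z : (Fin n → ZMod 2) × ZMod 2 × ZMod 2,
    (-1 : ℂ) ^ ((F z + ip u z.1 + v1 * z.2.1 + v2 * z.2.2).val)

/-!
Splitting the sum over `(y₁, y₂) ∈ 𝔽₂²` writes `W_F(u, v₁, v₂)` as a signed sum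
`A ± B ± C ± D` of the four Walsh values of the bent components at `u`. Each of them is
`±2^{n/2}`, and the product condition `A D = B C` survives the signs, so the four signed terms
are `A, s A, s' A, s s' A` for some signs `s, s'`; their sum `(1 + s)(1 + s') A` is
`0` or `±4 · 2^{n/2}`.
-/

lemma neg_one_pow_val_add_s18 (a b : ZMod 2) :
    (-1 : ℂ) ^ (a + b).val = (-1) ^ a.val * (-1) ^ b.val := by
  rw [ZMod.val_add, ← pow_add, ← neg_one_pow_eq_pow_mod_two]

lemma sum_zmod_two {M : Type*} [AddCommMonoid M] (f : ZMod 2 → M) :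
    ∑ y, f y = f 0 + f 1 :=
  Fin.sum_univ_two f

lemma WHT_eq_or_eq_neg_of_norm_eq {n : ℕ} {g : (Fin n → ZMod 2) → ZMod 2}
    {u : Fin n → ZMod 2} {r : ℝ} (h : ‖WHT g u‖ = r) :
    WHT g u = r ∨ WHT g u = -r := by
  have hreal : WHT g u = ((∑ x, (-1 : ℝ) ^ (g x + ip u x).val : ℝ) : ℂ) := by
    push_cast; rfl
  rw [hreal, norm_real, Real.norm_eq_abs, abs_eq (h ▸ abs_nonneg _)] at h
  rw [hreal]
  exact h.imp (congrArg _) fun h' => by rw [h', ofReal_neg]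

lemma WHT3_eq_signed_sum {n : ℕ} (a1 a2 a3 : (Fin n → ZMod 2) → ZMod 2)
    (u : Fin n → ZMod 2) (v1 v2 : ZMod 2) :
    WHT3 (fun z => z.2.1 * a1 z.1 + z.2.2 * a2 z.1 + a3 z.1) u v1 v2 =
      WHT a3 u + (-1) ^ v1.val * WHT (fun x => a1 x + a3 x) u
        + (-1) ^ v2.val * WHT (fun x => a2 x + a3 x) u
        + (-1) ^ v1.val * (-1) ^ v2.val * WHT (fun x => a1 x + a2 x + a3 x) u := by
  have fiber : ∀ y1 y2 : ZMod 2,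
      ∑ x, (-1 : ℂ) ^ (y1 * a1 x + y2 * a2 x + a3 x + ip u x + v1 * y1 + v2 * y2).val =
        (-1) ^ (v1 * y1).val * (-1) ^ (v2 * y2).val *
          WHT (fun x => y1 * a1 x + y2 * a2 x + a3 x) u := by
    intro y1 y2
    rw [WHT, mul_sum]
    refine sum_congr rfl fun x _ => ?_
    rw [neg_one_pow_val_add_s18, neg_one_pow_val_add_s18]
    ring
  rw [WHT3, Fintype.sum_prod_type, sum_comm, Fintype.sum_prod_type]
  simp only [sum_zmod_two, fiber, zero_mul, one_mul, zero_add, add_zero, mul_zero, mul_one,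
    ZMod.val_zero, pow_zero]
  ring

lemma mul_eq_or_eq_neg_of_sign {R : Type*} [Monoid R] [HasDistribNeg R] {e t B : R}
    (he : e = 1 ∨ e = -1) (hB : B = t ∨ B = -t) : e * B = t ∨ e * B = -t := by
  rcases he with rfl | rfl <;> rcases hB with rfl | rfl <;> simp

lemma add_add_add_eq_zero_or_of_mul_eq_mul {K : Type*} [Field K] [CharZero K]
    {t A B C D : K} (ht : t ≠ 0)
    (hA : A = t ∨ A = -t) (hB : B = t ∨ B = -t) (hC : C = t ∨ C = -t) (hD : D = t ∨ D = -t)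
    (h : A * D = B * C) :
    A + B + C + D = 0 ∨ A + B + C + D = 4 * t ∨ A + B + C + D = -(4 * t) := by
  have htt : t * t ≠ -(t * t) := fun h' =>
    ht (mul_self_eq_zero.mp (by linear_combination h' / 2))
  rcases hA with rfl | rfl <;> rcases hB with rfl | rfl <;> rcases hC with rfl | rfl <;>
    rcases hD with rfl | rfl <;>
    first
      | (left; ring1)
      | (right; left; ring1)
      | (right; right; ring1)
      | exact absurd (by linear_combination h) htt
      | exact absurd (by linear_combination -h) htt

lemma signed_add_eq_zero_or_of_mul_eq_mul {K : Type*} [Field K] [CharZero K]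
    {t A B C D e1 e2 : K} (ht : t ≠ 0)
    (hA : A = t ∨ A = -t) (hB : B = t ∨ B = -t) (hC : C = t ∨ C = -t) (hD : D = t ∨ D = -t)
    (he1 : e1 = 1 ∨ e1 = -1) (he2 : e2 = 1 ∨ e2 = -1) (h : A * D = B * C) :
    A + e1 * B + e2 * C + e1 * e2 * D = 0 ∨ A + e1 * B + e2 * C + e1 * e2 * D = 4 * t ∨
      A + e1 * B + e2 * C + e1 * e2 * D = -(4 * t) :=
  add_add_add_eq_zero_or_of_mul_eq_mul ht hA (mul_eq_or_eq_neg_of_sign he1 hB)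
    (mul_eq_or_eq_neg_of_sign he2 hC)
    (mul_eq_or_eq_neg_of_sign (mul_eq_or_eq_neg_of_sign he1 he2) hD)
    (by linear_combination e1 * e2 * h)

theorem semibent_of_bent_components_general (n : ℕ)
    (a1 a2 a3 : (Fin n → ZMod 2) → ZMod 2)
    (hb0 : ∀ u, ‖WHT a3 u‖ = 2 ^ (n / 2))
    (hb1 : ∀ u, ‖WHT (fun x => a1 x + a3 x) u‖ = 2 ^ (n / 2))
    (hb2 : ∀ u, ‖WHT (fun x => a2 x + a3 x) u‖ = 2 ^ (n / 2))
    (hb12 : ∀ u, ‖WHT (fun x => a1 x + a2 x + a3 x) u‖ = 2 ^ (n / 2))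
    (hprod : ∀ u, WHT a3 u * WHT (fun x => a1 x + a2 x + a3 x) u =
        WHT (fun x => a1 x + a3 x) u * WHT (fun x => a2 x + a3 x) u) :
    ∀ (u : Fin n → ZMod 2) (v1 v2 : ZMod 2),
      WHT3 (fun z => z.2.1 * a1 z.1 + z.2.2 * a2 z.1 + a3 z.1) u v1 v2 = 0 ∨
      WHT3 (fun z => z.2.1 * a1 z.1 + z.2.2 * a2 z.1 + a3 z.1) u v1 v2 = 2 ^ ((n + 4) / 2) ∨
      WHT3 (fun z => z.2.1 * a1 z.1 + z.2.2 * a2 z.1 + a3 z.1) u v1 v2 = -2 ^ ((n + 4) / 2) := by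
  intro u v1 v2
  have hpow : (2 : ℂ) ^ ((n + 4) / 2) = 4 * ((2 ^ (n / 2) : ℝ) : ℂ) := by
    rw [show (n + 4) / 2 = n / 2 + 2 by omega, pow_add]
    push_cast
    ring
  rw [WHT3_eq_signed_sum, hpow]
  exact signed_add_eq_zero_or_of_mul_eq_mul (ofReal_ne_zero.mpr (by positivity))
    (WHT_eq_or_eq_neg_of_norm_eq (hb0 u)) (WHT_eq_or_eq_neg_of_norm_eq (hb1 u))
    (WHT_eq_or_eq_neg_of_norm_eq (hb2 u)) (WHT_eq_or_eq_neg_of_norm_eq (hb12 u))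
    (neg_one_pow_eq_or ℂ _) (neg_one_pow_eq_or ℂ _) (hprod u)

theorem semibent_of_bent_components (n : ℕ) (hn : Even n)
    (a1 a2 a3 : (Fin n → ZMod 2) → ZMod 2)
    (hb0 : ∀ u, ‖WHT a3 u‖ = 2 ^ (n / 2))
    (hb1 : ∀ u, ‖WHT (fun x => a1 x + a3 x) u‖ = 2 ^ (n / 2))
    (hb2 : ∀ u, ‖WHT (fun x => a2 x + a3 x) u‖ = 2 ^ (n / 2))
    (hb12 : ∀ u, ‖WHT (fun x => a1 x + a2 x + a3 x) u‖ = 2 ^ (n / 2))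
    (hprod : ∀ u, WHT a3 u * WHT (fun x => a1 x + a2 x + a3 x) u =
        WHT (fun x => a1 x + a3 x) u * WHT (fun x => a2 x + a3 x) u) :
    ∀ (u : Fin n → ZMod 2) (v1 v2 : ZMod 2),
      WHT3 (fun z => z.2.1 * a1 z.1 + z.2.2 * a2 z.1 + a3 z.1) u v1 v2 = 0 ∨
      WHT3 (fun z => z.2.1 * a1 z.1 + z.2.2 * a2 z.1 + a3 z.1) u v1 v2 = 2 ^ ((n + 4) / 2) ∨
      WHT3 (fun z => z.2.1 * a1 z.1 + z.2.2 * a2 z.1 + a3 z.1) u v1 v2 = -2 ^ ((n + 4) / 2) :=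
  semibent_of_bent_components_general n a1 a2 a3 hb0 hb1 hb2 hb12 hprod
end
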